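/- arXiv:2302.01365 — 5 statements merged into one kernel-verified Lean document; each statement's English description precedes it below -/
import Mathlib

section
/- The set S = {p ∈ ℝ³ : 0 ≤ p_k ≤ 1 for k = 1,2,3 and p₁ + p₂ + p₃ = 3/2} is equal to the convex hull (over ℝ) of the six behaviour vectors {v₁, v₂, v₃, v₄, v₅, v₆}. -/
/-!
The set is the slice of the unit cube by the plane `p 0 + p 1 + p 2 = 3/2`, a compact convex set,
so by Krein–Milman it is the closure of the convex hull of its extreme points. At an extreme point
at most one coordinate lies strictly between `0` and `1`, since two such coordinates could be
shifted by `±ε` in opposite directions without leaving the slice. With coordinate sum `3/2` this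
leaves only the permutations of `(0, 1, 1/2)`, which are the six behaviours, and the convex hull of
finitely many points is already closed.
-/

noncomputable def behaviour : Fin 6 → Fin 3 → ℝ :=
  ![![1, 0, 1/2], ![0, 1, 1/2], ![(1:ℝ)/2, 1, 0],
    ![(1:ℝ)/2, 0, 1], ![0, 1/2, 1], ![1, 1/2, 0]]

open Set

theorem eq_zero_of_add_mem_of_sub_mem_of_mem_extremePoints {𝕜 E : Type*} [Ring 𝕜] [LinearOrder 𝕜]
    [IsStrictOrderedRing 𝕜] [Invertible (2 : 𝕜)] [AddCommGroup E] [Module 𝕜 E] {A : Set E}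
    {x y : E} (hx : x ∈ A.extremePoints 𝕜) (hadd : x + y ∈ A) (hsub : x - y ∈ A) : y = 0 :=
  add_eq_left.1 (hx.2 hadd hsub (mem_openSegment_add_sub x y))

def cubeSlice (ι : Type*) [Fintype ι] (s : ℝ) : Set (ι → ℝ) :=
  univ.pi (fun _ ↦ Icc 0 1) ∩ {p | ∑ k, p k = s}

section cubeSlice

variable {ι : Type*} [Fintype ι] {s : ℝ}

theorem convex_cubeSlice : Convex ℝ (cubeSlice ι s) :=
  (convex_pi fun _ _ ↦ convex_Icc 0 1).inter <|
    convex_hyperplane ⟨fun _ _ ↦ Finset.sum_add_distrib, fun _ _ ↦ (Finset.mul_sum ..).symm⟩ s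

theorem isCompact_cubeSlice : IsCompact (cubeSlice ι s) :=
  (isCompact_univ_pi fun _ ↦ isCompact_Icc).inter_right <|
    isClosed_eq (continuous_finsetSum _ fun k _ ↦ continuous_apply k) continuous_const

theorem add_smul_single_sub_single_mem_cubeSlice [DecidableEq ι] {p : ι → ℝ} {i j : ι} {t : ℝ}
    (hp : p ∈ cubeSlice ι s) (hij : i ≠ j) (hi : p i + t ∈ Icc 0 1) (hj : p j - t ∈ Icc 0 1) :
    p + t • (Pi.single i 1 - Pi.single j 1) ∈ cubeSlice ι s := by
  refine ⟨fun k _ ↦ ?_, ?_⟩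
  · rcases eq_or_ne k i with rfl | hki
    · simpa [hij] using hi
    rcases eq_or_ne k j with rfl | hkj
    · simpa [hki, sub_eq_add_neg] using hj
    simpa [hki, hkj] using hp.1 k (mem_univ k)
  · simpa [Finset.sum_add_distrib, ← Finset.mul_sum] using hp.2

theorem notMem_Ioo_of_mem_extremePoints_cubeSlice {p : ι → ℝ}
    (hp : p ∈ (cubeSlice ι s).extremePoints ℝ) {i j : ι} (hij : i ≠ j) (hi : p i ∈ Ioo 0 1) :
    p j ∉ Ioo 0 1 := by
  classical
  intro hj
  set ε := min (min (p i) (1 - p i)) (min (p j) (1 - p j))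
  have hε : 0 < ε := by simp only [ε, lt_min_iff, sub_pos]; exact ⟨hi, hj⟩
  obtain ⟨hεi, hεi', hεj, hεj'⟩ : ε ≤ p i ∧ ε ≤ 1 - p i ∧ ε ≤ p j ∧ ε ≤ 1 - p j :=
    ⟨(min_le_left _ _).trans (min_le_left _ _), (min_le_left _ _).trans (min_le_right _ _),
      (min_le_right _ _).trans (min_le_left _ _), (min_le_right _ _).trans (min_le_right _ _)⟩
  set v : ι → ℝ := Pi.single i 1 - Pi.single j 1
  have hadd : p + ε • v ∈ cubeSlice ι s :=
    add_smul_single_sub_single_mem_cubeSlice hp.1 hij ⟨by linarith, by linarith⟩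
      ⟨by linarith, by linarith⟩
  have hsub : p - ε • v ∈ cubeSlice ι s := by
    rw [sub_eq_add_neg, ← neg_smul]
    exact add_smul_single_sub_single_mem_cubeSlice hp.1 hij ⟨by linarith, by linarith⟩
      ⟨by linarith, by linarith⟩
  have hv := congrFun (eq_zero_of_add_mem_of_sub_mem_of_mem_extremePoints hp hadd hsub) i
  simp [v, hij, hε.ne'] at hv

end cubeSlice

theorem range_behaviour_subset_cubeSlice : range behaviour ⊆ cubeSlice (Fin 3) (3/2) := by
  rintro _ ⟨i, rfl⟩
  refine ⟨fun k _ ↦ ?_, ?_⟩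
  · fin_cases i <;> fin_cases k <;> norm_num [behaviour]
  · fin_cases i <;> norm_num [behaviour, Fin.sum_univ_three, Matrix.cons_val_two]

theorem extremePoints_cubeSlice_subset_range_behaviour :
    (cubeSlice (Fin 3) (3/2)).extremePoints ℝ ⊆ range behaviour := by
  intro p hp
  have hsum : p 0 + p 1 + p 2 = 3/2 := by simpa [Fin.sum_univ_three] using hp.1.2
  have htri : ∀ k, p k = 0 ∨ p k = 1 ∨ 0 < p k ∧ p k < 1 := fun k ↦ by
    obtain ⟨h0, h1⟩ := hp.1.1 k (mem_univ k)
    rcases h0.eq_or_lt with h0 | h0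
    · exact .inl h0.symm
    rcases h1.eq_or_lt with h1 | h1
    · exact .inr (.inl h1)
    · exact .inr (.inr ⟨h0, h1⟩)
  have hfrac : ∀ i j, i ≠ j → p i ∈ Ioo 0 1 → p j ∉ Ioo 0 1 := fun i j hij ↦
    notMem_Ioo_of_mem_extremePoints_cubeSlice hp hij
  have hp_eq : p = ![p 0, p 1, p 2] := by ext k; fin_cases k <;> rfl
  rw [hp_eq]
  -- Two coordinates lie in `{0, 1}`, and the sum `3/2` then forces the third to be `1/2`.
  rcases htri 0 with h0 | h0 | h0 <;> rcases htri 1 with h1 | h1 | h1 <;>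
    rcases htri 2 with h2 | h2 | h2
  all_goals first
    | exact absurd h1 (hfrac 0 1 (by decide) h0)
    | exact absurd h2 (hfrac 0 2 (by decide) h0)
    | exact absurd h2 (hfrac 1 2 (by decide) h1)
    | exfalso; linarith
    | simp [h0, h1, h2, behaviour]; linarith

/-- The set of behaviours satisfying the zero-sum bias is the convex hull of the six
extremal behaviour vectors. -/
theorem bias_set_eq_convexHull_behaviours :
    {p : Fin 3 → ℝ | (∀ k, 0 ≤ p k ∧ p k ≤ 1) ∧ p 0 + p 1 + p 2 = 3/2} =
      convexHull ℝ (Set.range behaviour) := by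
  have hS : {p : Fin 3 → ℝ | (∀ k, 0 ≤ p k ∧ p k ≤ 1) ∧ p 0 + p 1 + p 2 = 3/2} =
      cubeSlice (Fin 3) (3/2) := by
    ext p
    simp only [cubeSlice, mem_inter_iff, mem_pi, mem_univ, true_implies, mem_Icc, mem_ofPred_eq,
      Fin.sum_univ_three]
  rw [hS]
  refine (convexHull_min range_behaviour_subset_cubeSlice convex_cubeSlice).antisymm' ?_
  calc cubeSlice (Fin 3) (3/2)
      = closure (convexHull ℝ ((cubeSlice (Fin 3) (3/2)).extremePoints ℝ)) :=
        (closure_convexHull_extremePoints isCompact_cubeSlice convex_cubeSlice).symm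
    _ ⊆ closure (convexHull ℝ (range behaviour)) :=
        closure_mono (convexHull_mono extremePoints_cubeSlice_subset_range_behaviour)
    _ = convexHull ℝ (range behaviour) :=
        ((finite_range behaviour).isCompact_convexHull ℝ).isClosed.closure_eq
end

section
/- (Noncontextuality inequality.) Let ν be a noncontextual weight assignment with induced behaviours b₁, …, b₆ ∈ ℝ³. Then the first coordinate of b₁ plus the second coordinate of b₃ plus the third coordinate of b₅ is at most 5/2, i.e. b₁(1) + b₃(2) + b₅(3) ≤ 5/2. -/
/-!
Put `p i = ν(1, i) + ν(2, i)`; by preparation equivalence every row satisfies `ν(j, ·) ≤ p`, and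
`∑ p = 2`. Splitting `ν(j, i) vᵢ(k) = ν(j, i)/2 + ν(j, i) (vᵢ(k) - 1/2)` and charging only the
positive part of `vᵢ(k) - 1/2` to `p` gives `b_j(k) ≤ 1/2 + ∑ᵢ (vᵢ(k) - 1/2)⁺ pᵢ` (a dual LP
certificate). Every `vᵢ` has exactly one coordinate exceeding `1/2`, by `1/2`, so the three bounds
add up to `3/2 + (∑ p)/2 = 5/2`.
-/

open Finset

theorem sum_mul_le_add_sum_max_sub_mul {ι : Type*} [Fintype ι] {w p : ι → ℝ}
    (hw : ∀ i, 0 ≤ w i) (hwp : ∀ i, w i ≤ p i) (hw_sum : ∑ i, w i = 1) (f : ι → ℝ) (c : ℝ) :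
    ∑ i, w i * f i ≤ c + ∑ i, max (f i - c) 0 * p i :=
  calc ∑ i, w i * f i = ∑ i, (c * w i + (f i - c) * w i) := by congr! 1 with i; ring
    _ = c + ∑ i, (f i - c) * w i := by rw [sum_add_distrib, ← mul_sum, hw_sum, mul_one]
    _ ≤ c + ∑ i, max (f i - c) 0 * p i := by
      refine (add_le_add_iff_left c).2 (sum_le_sum fun i _ => ?_)
      exact (mul_le_mul_of_nonneg_right (le_max_left _ _) (hw i)).trans
        (mul_le_mul_of_nonneg_left (hwp i) (le_max_right _ _))

theorem sum_max_behaviour_sub_half (i : Fin 6) :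
    ∑ k, max (behaviour i k - 1/2) 0 = 1/2 := by
  fin_cases i <;> simp [behaviour, Fin.sum_univ_three] <;> norm_num

/-- Noncontextuality inequality: for any noncontextual weight assignment ν with induced
behaviours `b j = ∑ i, ν j i • behaviour i`, one has `b₁(1) + b₃(2) + b₅(3) ≤ 5/2`. -/
theorem noncontextuality_inequality
    (ν : Fin 6 → Fin 6 → ℝ)
    (hnn : ∀ j i, 0 ≤ ν j i)
    (hsum : ∀ j, ∑ i, ν j i = 1)
    (hequiv : ∀ i, ν 0 i + ν 1 i = ν 2 i + ν 3 i ∧ ν 2 i + ν 3 i = ν 4 i + ν 5 i)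
    (b : Fin 6 → Fin 3 → ℝ)
    (hb : ∀ j, b j = ∑ i, ν j i • behaviour i) :
    b 0 0 + b 2 1 + b 4 2 ≤ 5/2 := by
  set p : Fin 6 → ℝ := fun i => ν 0 i + ν 1 i with hp
  have hp_sum : ∑ i, p i = 2 := by
    rw [hp, sum_add_distrib, hsum, hsum]; norm_num
  have bound (j : Fin 6) (k : Fin 3) (hjp : ∀ i, ν j i ≤ p i) :
      b j k ≤ 1/2 + ∑ i, max (behaviour i k - 1/2) 0 * p i := by
    have hbjk : b j k = ∑ i, ν j i * behaviour i k := by simp [hb, Finset.sum_apply]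
    exact hbjk ▸ sum_mul_le_add_sum_max_sub_mul (hnn j) hjp (hsum j) _ _
  have h0 := bound 0 0 fun i => by linarith [hnn 1 i]
  have h2 := bound 2 1 fun i => by linarith [hequiv i, hnn 3 i]
  have h4 := bound 4 2 fun i => by linarith [hequiv i, hnn 5 i]
  calc b 0 0 + b 2 1 + b 4 2
      ≤ 3/2 + ∑ i, (∑ k, max (behaviour i k - 1/2) 0) * p i := by
        simp only [Fin.sum_univ_three, add_mul, sum_add_distrib]; linarith
    _ = 5/2 := by
        simp only [sum_max_behaviour_sub_half, ← mul_sum, hp_sum]; norm_num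
end

section
/- (Necessity of contextuality for biased multi-task models, algebraic form.) Let η ∈ [0, 1] and suppose ν is a noncontextual weight assignment with induced behaviours b₁, …, b₆ ∈ ℝ³ such that b₁(1) = b₃(2) = b₅(3) = (1 + η)/2 (these are the corresponding coordinates of the noise-shrunk extremal behaviours u_j(η) = η·v_j + (1 − η)·(1/2, 1/2, 1/2)). Then η ≤ 2/3. Equivalently, for every η > 2/3 no such noncontextual weight assignment exists. -/
/-!
Let `μ i = ν 0 i + ν 1 i` be the marginal shared by the three contexts `{0,1}, {2,3}, {4,5}`;
it has total mass `2`. Every `behaviour i` has one coordinate equal to `1` (its peak) and the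
other two at most `1/2`. So for each hidden index `i`, the contributions of `ν 0 i, ν 2 i, ν 4 i`
to the three targeted coordinates `b 0 0, b 2 1, b 4 2` total at most
`(μ i + ν 0 i + ν 2 i + ν 4 i) / 2`: only one of the three weights meets the peak, and it is
bounded by `μ i`. Summing over `i` gives `3 (1 + η) / 2 ≤ (2 + 3) / 2`, i.e. `η ≤ 2/3`.
-/

open Finset

section SinglePeak

variable {ι κ : Type*} [Fintype ι] [Fintype κ] [DecidableEq κ]

theorem sum_mul_le_of_single_peak (p x : κ → ℝ) (m c : ℝ) (k₀ : κ) (hp : ∀ k, 0 ≤ p k)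
    (hc : c ≤ 1) (hpeak : x k₀ ≤ 1) (hoff : ∀ k ≠ k₀, x k ≤ c) (hm : p k₀ ≤ m) :
    ∑ k, p k * x k ≤ (1 - c) * m + c * ∑ k, p k := by
  have hx : ∀ k, x k ≤ c + if k = k₀ then 1 - c else 0 := by
    intro k
    split_ifs with hk
    · subst hk; simpa using hpeak
    · simpa using hoff k hk
  calc ∑ k, p k * x k ≤ ∑ k, p k * (c + if k = k₀ then 1 - c else 0) :=
        sum_le_sum fun k _ => mul_le_mul_of_nonneg_left (hx k) (hp k)
    _ = (1 - c) * p k₀ + c * ∑ k, p k := by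
        simp only [mul_add, mul_ite, mul_zero, sum_add_distrib, sum_ite_eq', mem_univ,
          if_true, ← sum_mul]
        ring
    _ ≤ (1 - c) * m + c * ∑ k, p k := by gcongr

theorem sum_sum_mul_le_of_single_peak (p : κ → ι → ℝ) (v : ι → κ → ℝ) (μ : ι → ℝ) (c : ℝ)
    (peak : ι → κ) (hp : ∀ k i, 0 ≤ p k i) (hc : c ≤ 1) (hpeak : ∀ i, v i (peak i) ≤ 1)
    (hoff : ∀ i k, k ≠ peak i → v i k ≤ c) (hμ : ∀ k i, p k i ≤ μ i) :
    ∑ k, ∑ i, p k i * v i k ≤ (1 - c) * ∑ i, μ i + c * ∑ k, ∑ i, p k i := by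
  rw [sum_comm, sum_comm (f := p), mul_sum, mul_sum, ← sum_add_distrib]
  exact sum_le_sum fun i _ => sum_mul_le_of_single_peak (p · i) (v i) (μ i) c (peak i)
    (hp · i) hc (hpeak i) (hoff i) (hμ _ i)

end SinglePeak

def behaviourPeak : Fin 6 → Fin 3 := ![0, 1, 1, 2, 2, 0]

theorem behaviour_peak_le_one (i : Fin 6) : behaviour i (behaviourPeak i) ≤ 1 := by
  fin_cases i <;> simp [behaviour, behaviourPeak]

theorem behaviour_le_half_of_ne_peak (i : Fin 6) (k : Fin 3) (hk : k ≠ behaviourPeak i) :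
    behaviour i k ≤ 1 / 2 := by
  fin_cases i <;> fin_cases k <;> simp [behaviour, behaviourPeak] at hk ⊢

def targetIndex : Fin 3 → Fin 6 := ![0, 2, 4]

theorem sum_target_coord_le (ν : Fin 6 → Fin 6 → ℝ) (hnn : ∀ j i, 0 ≤ ν j i)
    (hsum : ∀ j, ∑ i, ν j i = 1)
    (hequiv : ∀ i, ν 0 i + ν 1 i = ν 2 i + ν 3 i ∧ ν 2 i + ν 3 i = ν 4 i + ν 5 i) :
    ∑ k, ∑ i, ν (targetIndex k) i * behaviour i k ≤ 5 / 2 := by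
  have hmarginal : ∀ k i, ν (targetIndex k) i ≤ ν 0 i + ν 1 i := by
    intro k i
    obtain ⟨h23, h45⟩ := hequiv i
    fin_cases k <;>
      simp only [targetIndex, Fin.zero_eta, Fin.mk_one, Fin.reduceFinMk, Matrix.cons_val,
        Matrix.cons_val_zero, Matrix.cons_val_one] <;>
      linarith [hnn 1 i, hnn 3 i, hnn 5 i]
  have hmass : ∑ i, (ν 0 i + ν 1 i) = 2 := by
    rw [sum_add_distrib, hsum 0, hsum 1]; norm_num
  have htargets : ∑ k, ∑ i, ν (targetIndex k) i = 3 := by simp [hsum]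
  have := sum_sum_mul_le_of_single_peak (fun k => ν (targetIndex k)) behaviour _ (1 / 2)
    behaviourPeak (fun k => hnn _) (by norm_num) behaviour_peak_le_one
    behaviour_le_half_of_ne_peak hmarginal
  rw [hmass, htargets] at this
  linarith

theorem contextuality_necessary_for_bias_general
    (η : ℝ)
    (ν : Fin 6 → Fin 6 → ℝ)
    (hnn : ∀ j i, 0 ≤ ν j i)
    (hsum : ∀ j, ∑ i, ν j i = 1)
    (hequiv : ∀ i, ν 0 i + ν 1 i = ν 2 i + ν 3 i ∧ ν 2 i + ν 3 i = ν 4 i + ν 5 i)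
    (b : Fin 6 → Fin 3 → ℝ)
    (hb : ∀ j, b j = ∑ i, ν j i • behaviour i)
    (h1 : b 0 0 = (1 + η)/2) (h3 : b 2 1 = (1 + η)/2) (h5 : b 4 2 = (1 + η)/2) :
    η ≤ 2/3 := by
  have hcoord : ∀ j k, b j k = ∑ i, ν j i * behaviour i k := fun j k => by
    simp only [hb, Finset.sum_apply, Pi.smul_apply, smul_eq_mul]
  have hbound := sum_target_coord_le ν hnn hsum hequiv
  simp only [targetIndex, ← hcoord, Fin.sum_univ_three, Matrix.cons_val_zero,
    Matrix.cons_val_one, Matrix.cons_val] at hbound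
  linarith

/-- Necessity of contextuality for biased multi-task models (algebraic form): if a
noncontextual weight assignment ν has induced behaviours `b j = ∑ i, ν j i • behaviour i`
with `b₁(1) = b₃(2) = b₅(3) = (1 + η)/2` for some `η ∈ [0, 1]`, then `η ≤ 2/3`. -/
theorem contextuality_necessary_for_bias
    (η : ℝ) (hη0 : 0 ≤ η) (hη1 : η ≤ 1)
    (ν : Fin 6 → Fin 6 → ℝ)
    (hnn : ∀ j i, 0 ≤ ν j i)
    (hsum : ∀ j, ∑ i, ν j i = 1)
    (hequiv : ∀ i, ν 0 i + ν 1 i = ν 2 i + ν 3 i ∧ ν 2 i + ν 3 i = ν 4 i + ν 5 i)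
    (b : Fin 6 → Fin 3 → ℝ)
    (hb : ∀ j, b j = ∑ i, ν j i • behaviour i)
    (h1 : b 0 0 = (1 + η)/2) (h3 : b 2 1 = (1 + η)/2) (h5 : b 4 2 = (1 + η)/2) :
    η ≤ 2/3 :=
  contextuality_necessary_for_bias_general η ν hnn hsum hequiv b hb h1 h3 h5
end

section
/- (Zero-noise impossibility.) There exists no noncontextual weight assignment ν whose induced behaviours satisfy b₁(1) = 1, b₃(2) = 1 and b₅(3) = 1; in particular no noncontextual weight assignment reproduces the extremal behaviours b₁ = v₁, b₃ = v₃ and b₅ = v₅ exactly. -/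
open Finset

theorem Finset.sum_eq_one_of_sum_mul_eq_one {ι : Type*} [Fintype ι] {p x : ι → ℝ} (s : Finset ι)
    (hp : ∀ i, 0 ≤ p i) (hp_sum : ∑ i, p i = 1) (hx : ∀ i, x i ≤ 1) (hs : ∀ i ∉ s, x i ≠ 1)
    (hpx : ∑ i, p i * x i = 1) : ∑ i ∈ s, p i = 1 := by
  have hdefect : ∑ i, p i * (1 - x i) = 0 := by
    simp only [mul_sub, mul_one, sum_sub_distrib, hp_sum, hpx, sub_self]
  have hterm := (sum_eq_zero_iff_of_nonneg fun i _ ↦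
    mul_nonneg (hp i) (sub_nonneg.2 (hx i))).1 hdefect
  rw [← hp_sum]
  refine sum_subset (subset_univ s) fun i _ hi ↦ ?_
  simpa [sub_eq_zero, Ne.symm (hs i hi)] using hterm i (mem_univ i)

theorem behaviour_le_one (i : Fin 6) (k : Fin 3) : behaviour i k ≤ 1 := by
  fin_cases i <;> fin_cases k <;> norm_num [behaviour]

theorem sum_smul_behaviour_apply (p : Fin 6 → ℝ) (k : Fin 3) :
    (∑ i, p i • behaviour i) k = ∑ i, p i * behaviour i k := by
  simp only [Finset.sum_apply, Pi.smul_apply, smul_eq_mul]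

/-- Zero-noise impossibility: there is no noncontextual weight assignment whose induced
behaviours `b j = ∑ i, ν j i • behaviour i` satisfy `b₁(1) = 1`, `b₃(2) = 1`, `b₅(3) = 1`. -/
theorem no_noncontextual_model_zero_noise :
    ¬ ∃ ν : Fin 6 → Fin 6 → ℝ,
        (∀ j i, 0 ≤ ν j i) ∧
        (∀ j, ∑ i, ν j i = 1) ∧
        (∀ i, ν 0 i + ν 1 i = ν 2 i + ν 3 i ∧ ν 2 i + ν 3 i = ν 4 i + ν 5 i) ∧
        (∑ i, ν 0 i • behaviour i) 0 = 1 ∧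
        (∑ i, ν 2 i • behaviour i) 1 = 1 ∧
        (∑ i, ν 4 i • behaviour i) 2 = 1 := by
  rintro ⟨ν, hν, hν_sum, hν_marg, h₁, h₃, h₅⟩
  rw [sum_smul_behaviour_apply] at h₁ h₃ h₅
  have concentrated (j : Fin 6) (k : Fin 3) (s : Finset (Fin 6))
      (hs : ∀ i ∉ s, behaviour i k ≠ 1) (h : ∑ i, ν j i * behaviour i k = 1) :
      ∑ i ∈ s, ν j i = 1 :=
    sum_eq_one_of_sum_mul_eq_one s (hν j) (hν_sum j) (behaviour_le_one · k) hs h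
  have c₁ := concentrated 0 0 {0, 5} (by intro i; fin_cases i <;> simp [behaviour]) h₁
  have c₃ := concentrated 2 1 {1, 2} (by intro i; fin_cases i <;> simp [behaviour]) h₃
  have c₅ := concentrated 4 2 {3, 4} (by intro i; fin_cases i <;> simp [behaviour]) h₅
  simp only [mem_singleton, Fin.reduceEq, not_false_eq_true, sum_insert, sum_singleton] at c₁ c₃ c₅
  have hmass : ∑ i, (ν 0 i + ν 1 i) = 2 := by rw [sum_add_distrib, hν_sum, hν_sum]; norm_num
  have hm₁ : 1 ≤ (ν 0 0 + ν 1 0) + (ν 0 5 + ν 1 5) := by linarith [hν 1 0, hν 1 5]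
  have hm₃ : 1 ≤ (ν 0 1 + ν 1 1) + (ν 0 2 + ν 1 2) := by
    linarith [(hν_marg 1).1, (hν_marg 2).1, hν 3 1, hν 3 2]
  have hm₅ : 1 ≤ (ν 0 3 + ν 1 3) + (ν 0 4 + ν 1 4) := by
    linarith [(hν_marg 3).1, (hν_marg 3).2, (hν_marg 4).1, (hν_marg 4).2, hν 5 3, hν 5 4]
  rw [Fin.sum_univ_six] at hmass
  linarith
end

section
/- Let ν be a noncontextual weight assignment. Then ν(3,1) + ν(1,2) + ν(1,3) + ν(3,6) − (ν(5,1) + ν(5,2) + ν(5,3) + ν(5,6)) ≤ 1. -/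
/-!
Indices are 0-based, shifted by one from the informal statement. Since the pair sums
`ν 0 i + ν 1 i`, `ν 2 i + ν 3 i`, `ν 4 i + ν 5 i` agree and all weights are nonnegative,
`ν j i - ν 4 i ≤ ν 5 i` for `j ∈ {0, 2}`. So the left-hand side is at most
`ν 5 0 + ν 5 1 + ν 5 2 + ν 5 5`, part of the row `ν 5`, which sums to `1`.
-/

/-- Key intermediate inequality for the noncontextuality inequality: for any
noncontextual weight assignment ν,
`ν(3,1) + ν(1,2) + ν(1,3) + ν(3,6) − (ν(5,1) + ν(5,2) + ν(5,3) + ν(5,6)) ≤ 1`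
(indices here are 1-based; below they are 0-based). -/
theorem intermediate_noncontextual_inequality
    (ν : Fin 6 → Fin 6 → ℝ)
    (hnn : ∀ j i, 0 ≤ ν j i)
    (hsum : ∀ j, ∑ i, ν j i = 1)
    (hequiv : ∀ i, ν 0 i + ν 1 i = ν 2 i + ν 3 i ∧ ν 2 i + ν 3 i = ν 4 i + ν 5 i) :
    ν 2 0 + ν 0 1 + ν 0 2 + ν 2 5 - (ν 4 0 + ν 4 1 + ν 4 2 + ν 4 5) ≤ 1 := by
  have hcol (i : Fin 6) : ν 0 i - ν 4 i ≤ ν 5 i ∧ ν 2 i - ν 4 i ≤ ν 5 i := by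
    obtain ⟨h01, h23⟩ := hequiv i
    exact ⟨by linarith [hnn 1 i], by linarith [hnn 3 i]⟩
  have hrow : ν 5 0 + ν 5 1 + ν 5 2 + ν 5 5 ≤ 1 := by
    have h5 := hsum 5
    rw [Fin.sum_univ_six] at h5
    linarith [hnn 5 3, hnn 5 4]
  linarith [(hcol 0).2, (hcol 1).1, (hcol 2).1, (hcol 5).2]
end
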